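/- arXiv:2301.04822 — 2 statements merged into one kernel-verified Lean document; each statement's English description precedes it below -/
import Mathlib

section
/- Let K, K' ⊆ ℝ^m be closed convex sets and f : K → ℝ, f' : K' → ℝ be κ-strongly convex functions. Suppose there exists Z ∈ K ∩ K' and α ≥ 0 such that |f(X̂) − f'(Z)| ≤ α and |f(Z) − f'(Z)| ≤ α, where X̂ = argmin_{X∈K} f(X), and the symmetric conditions hold with the roles of (K,f) and (K',f') exchanged. Then the minimizers X̂ = argmin_{X∈K} f(X) and X̂' = argmin_{X'∈K'} f'(X') satisfy ‖X̂ − X̂'‖² ≤ 12α/κ. -/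
/-- If `x` minimizes a `κ`-strongly convex function `f` (with `κ ≥ 0`) over `s`,
then `f x + κ/2 * ‖x - w‖² ≤ f w` for all `w ∈ s`. -/
lemma strongConvexOn_min_growth {E : Type*} [NormedAddCommGroup E] [NormedSpace ℝ E]
    {s : Set E} {f : E → ℝ} {κ : ℝ} (hκ : 0 ≤ κ)
    (hf : StrongConvexOn s κ f) {x : E} (hx : x ∈ s)
    (hmin : ∀ w ∈ s, f x ≤ f w) {w : E} (hw : w ∈ s) :
    f x + κ / 2 * ‖x - w‖ ^ 2 ≤ f w := by
  set C : ℝ := κ / 2 * ‖x - w‖ ^ 2 with hC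
  have hC0 : 0 ≤ C := by positivity
  have key : ∀ b : ℝ, 0 < b → b ≤ 1 → f x + C ≤ f w + b * C := by
    intro b hb hb1
    have ha : (0:ℝ) ≤ 1 - b := by linarith
    have hmem : (1 - b) • x + b • w ∈ s := hf.1 hx hw ha hb.le (by ring)
    have h := hf.2 hx hw ha hb.le (by ring : (1 - b) + b = 1)
    have hmin' := hmin _ hmem
    simp only [smul_eq_mul] at h
    have : f x ≤ (1 - b) * f x + b * f w - (1 - b) * b * C := le_trans hmin' h
    nlinarith
  refine le_of_forall_pos_le_add ?_
  intro ε hε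
  rcases le_or_gt C 0 with h0 | h0
  · have hCz : C = 0 := le_antisymm h0 hC0
    have := key 1 one_pos le_rfl
    rw [hCz] at this ⊢
    linarith
  · have hb : (0:ℝ) < min 1 (ε / (2 * C)) := by positivity
    have h := key _ hb (min_le_left _ _)
    have h2 : min 1 (ε / (2 * C)) * C ≤ (ε / (2 * C)) * C :=
      mul_le_mul_of_nonneg_right (min_le_right _ _) hC0
    have h3 : (ε / (2 * C)) * C = ε / 2 := by field_simp
    nlinarith

/-- Stability of strongly convex optimization: if `X` minimizes the `κ`-strongly
convex `f` over the closed convex set `K`, `X'` minimizes the `κ`-strongly convex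
`f'` over the closed convex set `K'`, and there are points `Z, Z' ∈ K ∩ K'` witnessing
that the two problems are pointwise `α`-close, then `‖X - X'‖² ≤ 12α/κ`. -/
theorem stmt_1 {m : ℕ} {K K' : Set (EuclideanSpace ℝ (Fin m))}
    (hKc : IsClosed K) (hK'c : IsClosed K')
    (hK : Convex ℝ K) (hK' : Convex ℝ K')
    {f f' : EuclideanSpace ℝ (Fin m) → ℝ} {κ α : ℝ}
    (hκ : 0 < κ) (hα : 0 ≤ α)
    (hf : StrongConvexOn K κ f) (hf' : StrongConvexOn K' κ f')
    {X X' : EuclideanSpace ℝ (Fin m)} (hX : X ∈ K) (hX' : X' ∈ K')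
    (hminX : ∀ W ∈ K, f X ≤ f W) (hminX' : ∀ W ∈ K', f' X' ≤ f' W)
    (h1 : ∃ Z ∈ K ∩ K', |f X - f' Z| ≤ α ∧ |f Z - f' Z| ≤ α)
    (h2 : ∃ Z ∈ K ∩ K', |f' X' - f Z| ≤ α ∧ |f' Z - f Z| ≤ α) :
    ‖X - X'‖ ^ 2 ≤ 12 * α / κ := by
  obtain ⟨Z, ⟨hZK, hZK'⟩, hZ1, hZ2⟩ := h1
  obtain ⟨Z', ⟨hZ'K, hZ'K'⟩, hZ'1, hZ'2⟩ := h2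
  -- growth inequalities
  have g1 : f X + κ / 2 * ‖X - Z‖ ^ 2 ≤ f Z :=
    strongConvexOn_min_growth hκ.le hf hX hminX hZK
  have g2 : f' X' + κ / 2 * ‖X' - Z‖ ^ 2 ≤ f' Z :=
    strongConvexOn_min_growth hκ.le hf' hX' hminX' hZK'
  have g3 : f X + κ / 2 * ‖X - Z'‖ ^ 2 ≤ f Z' :=
    strongConvexOn_min_growth hκ.le hf hX hminX hZ'K
  have g4 : f' X' + κ / 2 * ‖X' - Z'‖ ^ 2 ≤ f' Z' :=
    strongConvexOn_min_growth hκ.le hf' hX' hminX' hZ'K'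
  -- triangle inequalities
  have t1 : ‖X - X'‖ ≤ ‖X - Z‖ + ‖X' - Z‖ := by
    calc ‖X - X'‖ = ‖(X - Z) - (X' - Z)‖ := by abel_nf
    _ ≤ ‖X - Z‖ + ‖X' - Z‖ := norm_sub_le _ _
  have t2 : ‖X - X'‖ ≤ ‖X - Z'‖ + ‖X' - Z'‖ := by
    calc ‖X - X'‖ = ‖(X - Z') - (X' - Z')‖ := by abel_nf
    _ ≤ ‖X - Z'‖ + ‖X' - Z'‖ := norm_sub_le _ _
  rw [abs_le] at hZ1 hZ2 hZ'1 hZ'2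
  rw [le_div_iff₀ hκ]
  have n0 : (0:ℝ) ≤ ‖X - X'‖ := norm_nonneg _
  have n1 : (0:ℝ) ≤ ‖X - Z‖ := norm_nonneg _
  have n2 : (0:ℝ) ≤ ‖X' - Z‖ := norm_nonneg _
  have n3 : (0:ℝ) ≤ ‖X - Z'‖ := norm_nonneg _
  have n4 : (0:ℝ) ≤ ‖X' - Z'‖ := norm_nonneg _
  have hr1 : ‖X - X'‖ ^ 2 ≤ 2 * ‖X - Z‖ ^ 2 + 2 * ‖X' - Z‖ ^ 2 := by
    have := pow_le_pow_left₀ n0 t1 2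
    nlinarith [sq_nonneg (‖X - Z‖ - ‖X' - Z‖)]
  have hr2 : ‖X - X'‖ ^ 2 ≤ 2 * ‖X - Z'‖ ^ 2 + 2 * ‖X' - Z'‖ ^ 2 := by
    have := pow_le_pow_left₀ n0 t2 2
    nlinarith [sq_nonneg (‖X - Z'‖ - ‖X' - Z'‖)]
  have m1 := mul_le_mul_of_nonneg_left hr1 (by positivity : (0:ℝ) ≤ κ / 2)
  have m2 := mul_le_mul_of_nonneg_left hr2 (by positivity : (0:ℝ) ≤ κ / 2)
  have A1 : κ / 2 * ‖X - Z‖ ^ 2 + κ / 2 * ‖X' - Z‖ ^ 2 ≤ f X - f' X' + 3 * α := by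
    linarith [hZ1.1, hZ2.2]
  have A2 : κ / 2 * ‖X - Z'‖ ^ 2 + κ / 2 * ‖X' - Z'‖ ^ 2 ≤ f' X' - f X + 3 * α := by
    linarith [hZ'1.1, hZ'2.2]
  linarith [A1, A2, m1, m2]
end

section
/- Let ε, δ > 0 and let M : 𝒴 → 𝒪 be a randomized algorithm such that for every pair of adjacent inputs, with probability at least 1 − γ ≥ 1/2 over an independent internal random event B of M, the algorithm conditioned on B is (ε, δ)-differentially private. Then M is (ε + 2γ, δ + γ)-differentially private. -/
/-!
Split the output event according to the internal event `B`. On `B` the conditional guarantee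
holds, and multiplying it by `P B ≤ 1` turns conditional probabilities into joint ones, which are
at most the unconditional ones; outside `B` we lose at most `P Bᶜ ≤ γ`. This already gives an
`(ε, δ + γ)` guarantee, which is then weakened to `(ε + 2γ, δ + γ)`.
-/

open MeasureTheory ProbabilityTheory ENNReal Set

section

variable {Ω : Type*} [MeasurableSpace Ω] {μ : Measure Ω} [IsProbabilityMeasure μ] {s : Set Ω}

theorem measure_le_of_cond_le {t t' : Set Ω} {a b : ℝ≥0∞} (hs : MeasurableSet s)
    (h : μ[t | s] ≤ a * μ[t' | s] + b) : μ t ≤ a * μ t' + b + μ sᶜ :=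
  calc μ t ≤ μ (t ∩ s) + μ (t \ s) := measure_le_inter_add_sdiff _ _ _
    _ ≤ μ[t | s] * μ s + μ sᶜ := by
        rw [inter_comm, ← cond_mul_eq_inter hs]
        gcongr
        exact sdiff_subset_compl t s
    _ ≤ (a * μ[t' | s] + b) * μ s + μ sᶜ := by gcongr
    _ = a * (μ[t' | s] * μ s) + b * μ s + μ sᶜ := by ring
    _ ≤ a * μ t' + b + μ sᶜ := by
        rw [cond_mul_eq_inter hs]
        gcongr
        · exact inter_subset_right
        · exact mul_le_of_le_one_right' prob_le_one

theorem prob_compl_le_ofReal {γ : ℝ} (hs : MeasurableSet s) (h : 1 - γ ≤ μ.real s) :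
    μ sᶜ ≤ ENNReal.ofReal γ := by
  rw [← ofReal_measureReal, probReal_compl_eq_one_sub hs]
  exact ENNReal.ofReal_le_ofReal (by linarith)

end

theorem stmt_11_general {Y O Ω : Type*} [MeasurableSpace Ω]
    (Adj : Y → Y → Prop) (M : Y → Ω → O)
    (P : Measure Ω) [IsProbabilityMeasure P]
    (ε δ γ : ℝ) (hδ : 0 < δ) (hγ : 0 ≤ γ)
    (B : Set Ω) (hBmeas : MeasurableSet B) (hB : 1 - γ ≤ (P B).toReal)
    (hDP : ∀ y y', Adj y y' → ∀ S : Set O,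
      (ProbabilityTheory.cond P B) {ω | M y ω ∈ S}
        ≤ ENNReal.ofReal (Real.exp ε) * (ProbabilityTheory.cond P B) {ω | M y' ω ∈ S}
          + ENNReal.ofReal δ) :
    ∀ y y', Adj y y' → ∀ S : Set O,
      P {ω | M y ω ∈ S}
        ≤ ENNReal.ofReal (Real.exp (ε + 2 * γ)) * P {ω | M y' ω ∈ S}
          + ENNReal.ofReal (δ + γ) := by
  intro y y' hadj S
  calc P {ω | M y ω ∈ S}
      ≤ ENNReal.ofReal (Real.exp ε) * P {ω | M y' ω ∈ S} + ENNReal.ofReal δ + P Bᶜ :=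
        measure_le_of_cond_le hBmeas (hDP y y' hadj S)
    _ ≤ ENNReal.ofReal (Real.exp (ε + 2 * γ)) * P {ω | M y' ω ∈ S} + ENNReal.ofReal δ
          + ENNReal.ofReal γ := by
        gcongr
        · linarith
        · exact prob_compl_le_ofReal hBmeas hB
    _ = ENNReal.ofReal (Real.exp (ε + 2 * γ)) * P {ω | M y' ω ∈ S}
          + ENNReal.ofReal (δ + γ) := by
        rw [add_assoc, ENNReal.ofReal_add hδ.le hγ]

/-- If a randomized algorithm `M`, conditioned on an internal event `B` of
probability at least `1 - γ ≥ 1/2` (independent of the input), is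
`(ε, δ)`-differentially private, then `M` is `(ε + 2γ, δ + γ)`-differentially
private. -/
theorem stmt_11 {Y O Ω : Type*} [MeasurableSpace Ω]
    (Adj : Y → Y → Prop) (M : Y → Ω → O)
    (P : Measure Ω) [IsProbabilityMeasure P]
    (ε δ γ : ℝ) (hε : 0 < ε) (hδ : 0 < δ) (hγ : 0 ≤ γ) (hγ2 : γ ≤ 1 / 2)
    (B : Set Ω) (hBmeas : MeasurableSet B) (hB : 1 - γ ≤ (P B).toReal)
    (hDP : ∀ y y', Adj y y' → ∀ S : Set O,
      (ProbabilityTheory.cond P B) {ω | M y ω ∈ S}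
        ≤ ENNReal.ofReal (Real.exp ε) * (ProbabilityTheory.cond P B) {ω | M y' ω ∈ S}
          + ENNReal.ofReal δ) :
    ∀ y y', Adj y y' → ∀ S : Set O,
      P {ω | M y ω ∈ S}
        ≤ ENNReal.ofReal (Real.exp (ε + 2 * γ)) * P {ω | M y' ω ∈ S}
          + ENNReal.ofReal (δ + γ) :=
  stmt_11_general Adj M P ε δ γ hδ hγ B hBmeas hB hDP
end
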